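/- The affine Grassmann code C^A(ℓ,m), defined as the image of F(ℓ,m) under the evaluation map at all ℓ×ℓ' matrices over F_q, is a nondegenerate linear code of length q^{ℓℓ'} and dimension binomial(m, ℓ), where m = ℓ+ℓ'. -/

import Mathlib

open MvPolynomial

/-- The minor of the generic `ℓ × ℓ'` matrix of indeterminates determined by the
rows `r` and columns `c`. -/
noncomputable def genMinor {F : Type*} [Field F] (ℓ ℓ' k : ℕ)
    (r : Fin k → Fin ℓ) (c : Fin k → Fin ℓ') : MvPolynomial (Fin ℓ × Fin ℓ') F :=
  (Matrix.of fun i j => (X (r i, c j) : MvPolynomial (Fin ℓ × Fin ℓ') F)).det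

/-- The set of all minors (of all orders `0 ≤ k ≤ ℓ`, the order-`0` minor being `1`)
of the generic `ℓ × ℓ'` matrix, as elements of the polynomial ring. -/
def minorSet (F : Type*) [Field F] (ℓ ℓ' : ℕ) : Set (MvPolynomial (Fin ℓ × Fin ℓ') F) :=
  {p | ∃ (k : ℕ) (r : Fin k → Fin ℓ) (c : Fin k → Fin ℓ'),
    StrictMono r ∧ StrictMono c ∧ p = genMinor ℓ ℓ' k r c}

/-- The evaluation map, sending a polynomial to the tuple of its values at all
`ℓ × ℓ'` matrices over `F`, as a linear map. -/
noncomputable def evLM (F : Type*) [Field F] (ℓ ℓ' : ℕ) :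
    MvPolynomial (Fin ℓ × Fin ℓ') F →ₗ[F] (Matrix (Fin ℓ) (Fin ℓ') F → F) :=
  (aeval (fun x : Fin ℓ × Fin ℓ' => fun P : Matrix (Fin ℓ) (Fin ℓ') F => P x.1 x.2)).toLinearMap

/-- The affine Grassmann code `C^A(ℓ, ℓ+ℓ')`: the image of the span of all minors of
the generic `ℓ × ℓ'` matrix under the evaluation map. -/
noncomputable def affGrassCode (F : Type*) [Field F] (ℓ ℓ' : ℕ) :
    Submodule F (Matrix (Fin ℓ) (Fin ℓ') F → F) :=
  Submodule.map (evLM F ℓ ℓ') (Submodule.span F (minorSet F ℓ ℓ'))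

/-- The Hamming weight of a codeword: the number of nonzero coordinates. -/
noncomputable def wt {F : Type*} [Field F] {ℓ ℓ' : ℕ} (c : Matrix (Fin ℓ) (Fin ℓ') F → F) : ℕ :=
  Nat.card {P : Matrix (Fin ℓ) (Fin ℓ') F // c P ≠ 0}

/-!
Expanding a minor by the Leibniz formula writes it as a signed sum of squarefree monomials, and
the monomial of its diagonal, which remembers both the row set `s` and the column set `t`, occurs
in no other minor. Hence the minors are linearly independent. Being of degree at most `1 < q` in
each variable, their span meets the kernel of evaluation at all points of `F^(ℓ × ℓ')` trivially,
so the dimension of the code is the number of pairs `(s, t)` with `#s = #t`; via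
`(s, t) ↦ sᶜ ⊔ t` these are the `ℓ`-subsets of an `(ℓ + ℓ')`-set. The order-`0` minor `1` shows
that the code is nondegenerate.
-/

open Finset

universe u

-- `MvPolynomial.eq_zero_of_eval_eq_zero` requires `σ` and `K` to live in the same universe.
theorem MvPolynomial.eq_zero_of_eval_eq_zero' {K : Type u} [Field K] [Fintype K]
    {σ : Type*} [Finite σ] (p : MvPolynomial σ K) (h : ∀ v : σ → K, eval v p = 0)
    (hp : p ∈ restrictDegree σ K (Fintype.card K - 1)) : p = 0 := by
  classical
  let e : σ ≃ ULift.{u} (Fin (Nat.card σ)) := (Finite.equivFin σ).trans Equiv.ulift.symm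
  apply rename_injective _ e.injective
  rw [map_zero]
  refine eq_zero_of_eval_eq_zero _ K _ (fun v => by rw [eval_rename]; exact h _) ?_
  rw [mem_restrictDegree_iff_sup] at hp ⊢
  intro i
  rw [degrees_rename_of_injective e.injective, ← e.apply_symm_apply i,
    Multiset.count_map_eq_count' _ _ e.injective]
  exact hp _

theorem Multiset.toFinsupp_val {σ : Type*} [DecidableEq σ] (S : Finset σ) :
    Multiset.toFinsupp S.val = ∑ x ∈ S, Finsupp.single x 1 := by
  rw [Multiset.toFinsupp_eq_iff, Finsupp.toMultiset_sum_single, one_nsmul]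

namespace MvPolynomial
variable {σ R : Type*} [CommSemiring R] [DecidableEq σ]

theorem prod_X_eq_monomial (S : Finset σ) :
    ∏ x ∈ S, (X x : MvPolynomial σ R) = monomial (Multiset.toFinsupp S.val) 1 := by
  rw [Multiset.toFinsupp_val, monomial_sum_one]
  rfl

theorem monomial_toFinsupp_mem_restrictDegree (S : Finset σ) (a : R) {n : ℕ} (hn : 1 ≤ n) :
    monomial (Multiset.toFinsupp S.val) a ∈ restrictDegree σ R n := by
  rw [mem_restrictDegree]
  intro s hs i
  rw [mem_singleton.1 (support_monomial_subset hs), Multiset.toFinsupp_apply]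
  exact (Multiset.nodup_iff_count_le_one.1 S.nodup i).trans hn

end MvPolynomial

section PermGraph
variable {α β : Type*} [DecidableEq α] [DecidableEq β] {k k' : ℕ}

-- The variables of the `σ`-term in the Leibniz expansion of the minor with rows `r`, columns `c`.
def permGraph (r : Fin k → α) (c : Fin k → β) (σ : Equiv.Perm (Fin k)) : Finset (α × β) :=
  univ.image fun i => (r (σ i), c i)

theorem eq_one_of_permGraph_eq {r : Fin k → α} {c : Fin k → β} (hr : Function.Injective r)
    (hc : Function.Injective c) {σ : Equiv.Perm (Fin k)}
    (h : permGraph r c σ = permGraph r c 1) : σ = 1 := by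
  ext i
  have hi : (r (σ i), c i) ∈ permGraph r c 1 := h ▸ mem_image_of_mem _ (mem_univ i)
  obtain ⟨j, -, hj⟩ := mem_image.1 hi
  obtain ⟨hrj, hcj⟩ := Prod.mk.inj hj
  rw [hc hcj] at hrj
  simpa using congrArg Fin.val (hr hrj).symm

theorem image_eq_of_permGraph_eq {r : Fin k → α} {c : Fin k → β} {r' : Fin k' → α}
    {c' : Fin k' → β} {σ : Equiv.Perm (Fin k')} (h : permGraph r' c' σ = permGraph r c 1) :
    univ.image r' = univ.image r ∧ univ.image c' = univ.image c := by
  have hfst := congrArg (image Prod.fst) h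
  have hsnd := congrArg (image Prod.snd) h
  simp only [permGraph, image_image, Function.comp_def, Equiv.Perm.coe_one, id] at hfst hsnd
  refine ⟨?_, hsnd⟩
  calc univ.image r' = (univ.image σ).image r' := by rw [image_univ_equiv]
    _ = univ.image r := by rw [image_image]; exact hfst

end PermGraph

section GenMinor
variable {F : Type*} [Field F] {ℓ ℓ' k : ℕ}

theorem genMinor_eq_sum (r : Fin k → Fin ℓ) {c : Fin k → Fin ℓ'} (hc : Function.Injective c) :
    (genMinor ℓ ℓ' k r c : MvPolynomial (Fin ℓ × Fin ℓ') F) =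
      ∑ σ : Equiv.Perm (Fin k),
        Equiv.Perm.sign σ • monomial (Multiset.toFinsupp (permGraph r c σ).val) 1 := by
  rw [genMinor, Matrix.det_apply]
  refine sum_congr rfl fun σ _ => ?_
  rw [permGraph, ← prod_X_eq_monomial, prod_image fun i _ j _ hij => hc (Prod.mk.inj hij).2]
  rfl

theorem coeff_genMinor (r : Fin k → Fin ℓ) {c : Fin k → Fin ℓ'} (hc : Function.Injective c)
    (S : Finset (Fin ℓ × Fin ℓ')) :
    coeff (Multiset.toFinsupp S.val) (genMinor ℓ ℓ' k r c : MvPolynomial (Fin ℓ × Fin ℓ') F) =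
      ∑ σ : Equiv.Perm (Fin k), Equiv.Perm.sign σ • if permGraph r c σ = S then (1 : F) else 0 := by
  simp only [genMinor_eq_sum r hc, coeff_sum, coeff_smul, coeff_monomial,
    Multiset.toFinsupp.injective.eq_iff, Finset.val_inj]

theorem genMinor_mem_restrictDegree (r : Fin k → Fin ℓ) {c : Fin k → Fin ℓ'}
    (hc : Function.Injective c) {n : ℕ} (hn : 1 ≤ n) :
    (genMinor ℓ ℓ' k r c : MvPolynomial (Fin ℓ × Fin ℓ') F) ∈ restrictDegree _ F n := by
  rw [genMinor_eq_sum r hc]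
  exact Submodule.sum_mem _ fun σ _ =>
    Submodule.smul_of_tower_mem _ _ (monomial_toFinsupp_mem_restrictDegree _ _ hn)

end GenMinor

abbrev MinorIndex (ℓ ℓ' : ℕ) := {st : Finset (Fin ℓ) × Finset (Fin ℓ') // #st.1 = #st.2}

namespace MinorIndex
variable {F : Type*} [Field F] {ℓ ℓ' : ℕ}

def rows (i : MinorIndex ℓ ℓ') : Fin #i.1.1 ↪o Fin ℓ := i.1.1.orderEmbOfFin rfl

def cols (i : MinorIndex ℓ ℓ') : Fin #i.1.1 ↪o Fin ℓ' := i.1.2.orderEmbOfFin i.2.symm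

def equivCardEq : MinorIndex ℓ ℓ' ≃ {u : Finset (Fin ℓ ⊕ Fin ℓ') // #u = ℓ} where
  toFun i := ⟨i.1.1ᶜ.disjSum i.1.2, by
    rw [card_disjSum, card_compl, Fintype.card_fin, ← i.2]
    exact Nat.sub_add_cancel (card_le_univ _ |>.trans_eq (Fintype.card_fin ℓ))⟩
  invFun u := ⟨(u.1.toLeftᶜ, u.1.toRight), by
    have hu : #u.1.toLeft + #u.1.toRight = ℓ := card_toLeft_add_card_toRight.trans u.2
    rw [card_compl, Fintype.card_fin]
    dsimp only
    omega⟩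
  left_inv i := by simp
  right_inv u := by simp [toLeft_disjSum_toRight]

theorem card_eq_choose : Fintype.card (MinorIndex ℓ ℓ') = (ℓ + ℓ').choose ℓ := by
  rw [Fintype.card_congr equivCardEq, Fintype.card_finset_len, Fintype.card_sum,
    Fintype.card_fin, Fintype.card_fin]

variable (F) in
noncomputable def minor (i : MinorIndex ℓ ℓ') : MvPolynomial (Fin ℓ × Fin ℓ') F :=
  genMinor ℓ ℓ' _ i.rows i.cols

noncomputable def diagExponent (i : MinorIndex ℓ ℓ') : Fin ℓ × Fin ℓ' →₀ ℕ :=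
  Multiset.toFinsupp (permGraph i.rows i.cols 1).val

theorem minor_mk {k : ℕ} (s : Finset (Fin ℓ)) (t : Finset (Fin ℓ')) (hs : #s = k) (ht : #t = k) :
    minor F ⟨(s, t), hs.trans ht.symm⟩ =
      genMinor ℓ ℓ' k (s.orderEmbOfFin hs) (t.orderEmbOfFin ht) := by
  subst hs
  rfl

variable (F ℓ ℓ') in
theorem range_minor : Set.range (minor F) = minorSet F ℓ ℓ' := by
  ext p
  constructor
  · rintro ⟨i, rfl⟩
    exact ⟨_, _, _, i.rows.strictMono, i.cols.strictMono, rfl⟩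
  · rintro ⟨k, r, c, hr, hc, rfl⟩
    have hs : #(univ.image r) = k := by simp [card_image_of_injective _ hr.injective]
    have ht : #(univ.image c) = k := by simp [card_image_of_injective _ hc.injective]
    refine ⟨⟨(univ.image r, univ.image c), hs.trans ht.symm⟩, ?_⟩
    rw [minor_mk _ _ hs ht,
      ← orderEmbOfFin_unique hs (fun x => mem_image_of_mem r (mem_univ x)) hr,
      ← orderEmbOfFin_unique ht (fun x => mem_image_of_mem c (mem_univ x)) hc]

theorem coeff_diagExponent_minor (i j : MinorIndex ℓ ℓ') :
    coeff (diagExponent i) (minor F j) = if j = i then 1 else 0 := by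
  rw [diagExponent, minor, coeff_genMinor _ j.cols.injective]
  split_ifs with hji
  · subst hji
    have hσ (σ : Equiv.Perm _) (hσ : σ ≠ 1) :=
      mt (eq_one_of_permGraph_eq j.rows.injective j.cols.injective) hσ
    rw [sum_eq_single 1 (fun σ _ h => by rw [if_neg (hσ σ h), smul_zero]) (by simp)]
    simp
  · refine sum_eq_zero fun σ _ => ?_
    rw [if_neg, smul_zero]
    intro h
    obtain ⟨hr, hc⟩ := image_eq_of_permGraph_eq h
    simp only [rows, cols, image_orderEmbOfFin_univ] at hr hc
    exact hji (Subtype.ext (Prod.ext hr hc))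

theorem linearIndependent_minor : LinearIndependent F (minor F (ℓ := ℓ) (ℓ' := ℓ')) := by
  rw [Fintype.linearIndependent_iff]
  intro g hg i
  simpa [coeff_sum, coeff_diagExponent_minor] using congrArg (coeff (diagExponent i)) hg

end MinorIndex

section AffGrassCode
variable {F : Type*} [Field F] {ℓ ℓ' : ℕ}

theorem evLM_apply (p : MvPolynomial (Fin ℓ × Fin ℓ') F) (P : Matrix (Fin ℓ) (Fin ℓ') F) :
    evLM F ℓ ℓ' p P = eval (fun x => P x.1 x.2) p := by
  change Pi.evalAlgHom F (fun _ => F) P (aeval _ p) = _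
  rw [comp_aeval_apply]
  rfl

variable (F ℓ ℓ')

theorem one_mem_affGrassCode : 1 ∈ affGrassCode F ℓ ℓ' :=
  ⟨1, Submodule.subset_span ⟨0, Fin.elim0, Fin.elim0, fun a => a.elim0, fun a => a.elim0,
    Matrix.det_fin_zero.symm⟩, map_one (aeval _)⟩

theorem span_minorSet_le_restrictDegree {n : ℕ} (hn : 1 ≤ n) :
    Submodule.span F (minorSet F ℓ ℓ') ≤ restrictDegree _ F n :=
  Submodule.span_le.2 fun _ ⟨_, _, _, _, hc, hp⟩ =>
    hp ▸ genMinor_mem_restrictDegree _ hc.injective hn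

theorem disjoint_restrictDegree_ker_evLM [Fintype F] :
    Disjoint (restrictDegree _ F (Fintype.card F - 1)) (LinearMap.ker (evLM F ℓ ℓ')) := by
  refine Submodule.disjoint_def.2 fun p hp hker => eq_zero_of_eval_eq_zero' p (fun v => ?_) hp
  simpa [evLM_apply] using congrFun hker (Matrix.of fun i j => v (i, j))

theorem finrank_affGrassCode [Fintype F] :
    Module.finrank F (affGrassCode F ℓ ℓ') = (ℓ + ℓ').choose ℓ := by
  have hdisj : Disjoint (Submodule.span F (Set.range (MinorIndex.minor F)))
      (LinearMap.ker (evLM F ℓ ℓ')) := by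
    refine (disjoint_restrictDegree_ker_evLM F ℓ ℓ').mono_left ?_
    rw [MinorIndex.range_minor]
    exact span_minorSet_le_restrictDegree F ℓ ℓ' (Nat.le_sub_one_of_lt Fintype.one_lt_card)
  rw [affGrassCode, ← MinorIndex.range_minor, Submodule.map_span, ← Set.range_comp,
    finrank_span_eq_card (MinorIndex.linearIndependent_minor.map hdisj),
    MinorIndex.card_eq_choose]

end AffGrassCode

theorem affGrassCode_length_dim_nondegenerate_general (F : Type*) [Field F] [Fintype F] (q ℓ ℓ' : ℕ)
    (hq : Fintype.card F = q) :
    Fintype.card (Matrix (Fin ℓ) (Fin ℓ') F) = q ^ (ℓ * ℓ')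
      ∧ Module.finrank F (affGrassCode F ℓ ℓ') = (ℓ + ℓ').choose ℓ
      ∧ ∀ P : Matrix (Fin ℓ) (Fin ℓ') F, ∃ c ∈ affGrassCode F ℓ ℓ', c P ≠ 0 := by
  refine ⟨?_, finrank_affGrassCode F ℓ ℓ',
    fun P => ⟨1, one_mem_affGrassCode F ℓ ℓ', one_ne_zero⟩⟩
  rw [← hq, mul_comm, pow_mul]
  exact (Fintype.card_fun (α := Fin ℓ) (β := Fin ℓ' → F)).trans (by simp)

/-- The affine Grassmann code is a nondegenerate linear code of length `q^(ℓℓ')`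
and dimension `(ℓ+ℓ').choose ℓ`. -/
theorem affGrassCode_length_dim_nondegenerate (F : Type*) [Field F] [Fintype F] (q ℓ ℓ' : ℕ)
    (hq : Fintype.card F = q) (hℓ : 1 ≤ ℓ) (hℓℓ' : ℓ ≤ ℓ') :
    Fintype.card (Matrix (Fin ℓ) (Fin ℓ') F) = q ^ (ℓ * ℓ')
      ∧ Module.finrank F (affGrassCode F ℓ ℓ') = (ℓ + ℓ').choose ℓ
      ∧ ∀ P : Matrix (Fin ℓ) (Fin ℓ') F, ∃ c ∈ affGrassCode F ℓ ℓ', c P ≠ 0 :=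
  affGrassCode_length_dim_nondegenerate_general F q ℓ ℓ' hq
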